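/- (Covariance structure of the mean-of-unique-variables aggregates.) Let z be a random vector in ℝ^q following the latent factor model z = A x + ε, where A is a q×p binding matrix with entries in {0,1}, x is a random vector in ℝ^p with mean zero and covariance Σ = (σ_{lk}), and ε is a random vector in ℝ^q with mean zero, covariance Γ = diag(γ₁,…,γ_q), uncorrelated with x, and all entries square-integrable. For l ∈ {1,…,p}, let S_l = {j : the j-th row of A equals the l-th standard basis vector of ℝ^p}, assume |S_l| ≥ 1, and define the aggregate m_l = |S_l|^{-1} Σ_{j ∈ S_l} z_j. Then for all l ≠ k, Cov(m_l, m_k) = σ_{lk}, and for all l, Var(m_l) = σ_{ll} + |S_l|^{-2} Σ_{j ∈ S_l} γ_j. -/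

import Mathlib

/-! On a unique variable `j ∈ S_l` the model reads `z_j = x_l + ε_j`, so by
bilinearity `Cov(m_l, m_k)` is the average over `S_l × S_k` of
`Cov(x_l + ε_j, x_k + ε_i) = σ_{lk} + [i = j] γ_j`. The noise terms survive only on
`S_l ∩ S_k`, which is empty for `l ≠ k` and is `S_l` for `l = k`. -/

open Matrix Finset MeasureTheory

noncomputable section

open scoped Classical in
/-- The set of unique lower-level variables of the `l`-th higher-level variable:
indices `j` whose row of `A` equals the `l`-th standard basis vector. -/
noncomputable def uniqueSet {q p : ℕ} (A : Matrix (Fin q) (Fin p) ℝ) (l : Fin p) :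
    Finset (Fin q) :=
  Finset.univ.filter fun j => ∀ k, A j k = if k = l then 1 else 0

open ProbabilityTheory

section UniqueSet

variable {q p : ℕ} {A : Matrix (Fin q) (Fin p) ℝ}

theorem mem_uniqueSet {l : Fin p} {j : Fin q} :
    j ∈ uniqueSet A l ↔ ∀ k, A j k = if k = l then 1 else 0 := by
  simp [uniqueSet]

theorem sum_mul_eq_of_mem_uniqueSet {l : Fin p} {j : Fin q} (hj : j ∈ uniqueSet A l)
    (v : Fin p → ℝ) : ∑ k, A j k * v k = v l := by
  simp [mem_uniqueSet.mp hj]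

theorem disjoint_uniqueSet {l k : Fin p} (hlk : l ≠ k) :
    Disjoint (uniqueSet A l) (uniqueSet A k) := by
  refine disjoint_left.mpr fun j hl hk => ?_
  have h := (mem_uniqueSet.mp hl k).symm.trans (mem_uniqueSet.mp hk k)
  simp [Ne.symm hlk] at h

end UniqueSet

section Covariance

variable {Ω : Type*} [MeasurableSpace Ω] {μ : Measure Ω}

theorem covariance_eq_integral_mul {X Y : Ω → ℝ} (hX : ∫ ω, X ω ∂μ = 0)
    (hY : ∫ ω, Y ω ∂μ = 0) : cov[X, Y; μ] = ∫ ω, X ω * Y ω ∂μ := by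
  simp [covariance, hX, hY]

theorem covariance_add_add_of_uncorrelated [IsFiniteMeasure μ] {X X' E E' : Ω → ℝ}
    (hX : MemLp X 2 μ) (hX' : MemLp X' 2 μ) (hE : MemLp E 2 μ) (hE' : MemLp E' 2 μ)
    (hXE' : cov[X, E'; μ] = 0) (hEX' : cov[E, X'; μ] = 0) :
    cov[X + E, X' + E'; μ] = cov[X, X'; μ] + cov[E, E'; μ] := by
  rw [covariance_add_left hX hE (hX'.add hE'), covariance_add_right hX hX' hE',
    covariance_add_right hE hX' hE', hXE', hEX']
  ring

theorem covariance_const_mul_sum_const_mul_sum [IsFiniteMeasure μ] {ι ι' : Type*}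
    {X : ι → Ω → ℝ} {Y : ι' → Ω → ℝ} {s : Finset ι} {t : Finset ι'} (a b : ℝ)
    (hX : ∀ i ∈ s, MemLp (X i) 2 μ) (hY : ∀ i ∈ t, MemLp (Y i) 2 μ) :
    cov[fun ω => a * ∑ i ∈ s, X i ω, fun ω => b * ∑ i ∈ t, Y i ω; μ] =
      a * b * ∑ i ∈ s, ∑ j ∈ t, cov[X i, Y j; μ] := by
  rw [covariance_const_mul_left, covariance_const_mul_right,
    covariance_fun_sum_fun_sum' hX hY]
  ring

end Covariance

section LatentFactorModel

variable {Ω : Type*} {q p : ℕ} {A : Matrix (Fin q) (Fin p) ℝ} {x : Ω → Fin p → ℝ}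
  {ε z : Ω → Fin q → ℝ}

theorem eq_add_of_mem_uniqueSet (hz : ∀ ω j, z ω j = (∑ k, A j k * x ω k) + ε ω j)
    {l : Fin p} {j : Fin q} (hj : j ∈ uniqueSet A l) :
    (fun ω => z ω j) = (fun ω => x ω l) + fun ω => ε ω j :=
  funext fun ω => by rw [hz, sum_mul_eq_of_mem_uniqueSet hj, Pi.add_apply]

variable [MeasurableSpace Ω] {μ : Measure Ω}

theorem covariance_of_mem_uniqueSet [IsFiniteMeasure μ] (Sig : Matrix (Fin p) (Fin p) ℝ)
    (γ : Fin q → ℝ) (hxL2 : ∀ l, MemLp (fun ω => x ω l) 2 μ)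
    (hεL2 : ∀ j, MemLp (fun ω => ε ω j) 2 μ) (hx0 : ∀ l, ∫ ω, x ω l ∂μ = 0)
    (hε0 : ∀ j, ∫ ω, ε ω j ∂μ = 0) (hcovx : ∀ l k, ∫ ω, x ω l * x ω k ∂μ = Sig l k)
    (hcovε : ∀ i j, ∫ ω, ε ω i * ε ω j ∂μ = if i = j then γ i else 0)
    (huncorr : ∀ l j, ∫ ω, x ω l * ε ω j ∂μ = 0)
    (hz : ∀ ω j, z ω j = (∑ k, A j k * x ω k) + ε ω j) {l k : Fin p} {j i : Fin q}
    (hj : j ∈ uniqueSet A l) (hi : i ∈ uniqueSet A k) :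
    cov[fun ω => z ω j, fun ω => z ω i; μ] = Sig l k + if j = i then γ j else 0 := by
  rw [eq_add_of_mem_uniqueSet hz hj, eq_add_of_mem_uniqueSet hz hi,
    covariance_add_add_of_uncorrelated (hxL2 l) (hxL2 k) (hεL2 j) (hεL2 i),
    covariance_eq_integral_mul (hx0 l) (hx0 k), hcovx,
    covariance_eq_integral_mul (hε0 j) (hε0 i), hcovε]
  · rw [covariance_eq_integral_mul (hx0 l) (hε0 i), huncorr]
  · rw [covariance_eq_integral_mul (hε0 j) (hx0 k)]
    simp_rw [mul_comm (ε _ j)]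
    exact huncorr k j

theorem covariance_mean_uniqueSet [IsFiniteMeasure μ] (Sig : Matrix (Fin p) (Fin p) ℝ)
    (γ : Fin q → ℝ) (hxL2 : ∀ l, MemLp (fun ω => x ω l) 2 μ)
    (hεL2 : ∀ j, MemLp (fun ω => ε ω j) 2 μ) (hx0 : ∀ l, ∫ ω, x ω l ∂μ = 0)
    (hε0 : ∀ j, ∫ ω, ε ω j ∂μ = 0) (hcovx : ∀ l k, ∫ ω, x ω l * x ω k ∂μ = Sig l k)
    (hcovε : ∀ i j, ∫ ω, ε ω i * ε ω j ∂μ = if i = j then γ i else 0)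
    (huncorr : ∀ l j, ∫ ω, x ω l * ε ω j ∂μ = 0)
    (hz : ∀ ω j, z ω j = (∑ k, A j k * x ω k) + ε ω j) {l k : Fin p}
    (hl : (uniqueSet A l).Nonempty) (hk : (uniqueSet A k).Nonempty) :
    cov[fun ω => ((uniqueSet A l).card : ℝ)⁻¹ * ∑ j ∈ uniqueSet A l, z ω j,
      fun ω => ((uniqueSet A k).card : ℝ)⁻¹ * ∑ i ∈ uniqueSet A k, z ω i; μ] =
      Sig l k + ((uniqueSet A l).card : ℝ)⁻¹ * ((uniqueSet A k).card : ℝ)⁻¹ *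
        ∑ j ∈ uniqueSet A l ∩ uniqueSet A k, γ j := by
  have hzL2 {l : Fin p} {j : Fin q} (hj : j ∈ uniqueSet A l) : MemLp (fun ω => z ω j) 2 μ := by
    rw [eq_add_of_mem_uniqueSet hz hj]
    exact (hxL2 l).add (hεL2 j)
  have hcl : ((uniqueSet A l).card : ℝ) ≠ 0 := by exact_mod_cast hl.card_pos.ne'
  have hck : ((uniqueSet A k).card : ℝ) ≠ 0 := by exact_mod_cast hk.card_pos.ne'
  rw [covariance_const_mul_sum_const_mul_sum _ _ (fun _ => hzL2) (fun _ => hzL2),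
    sum_congr rfl fun j hj => sum_congr rfl fun i hi =>
    covariance_of_mem_uniqueSet Sig γ hxL2 hεL2 hx0 hε0 hcovx hcovε huncorr hz hj hi]
  simp only [sum_add_distrib, sum_const, nsmul_eq_mul, sum_ite_eq, sum_ite_mem]
  field_simp

end LatentFactorModel

theorem stmt15_general {Ω : Type*} [MeasurableSpace Ω] (μ : Measure Ω) [IsProbabilityMeasure μ]
    {q p : ℕ} (A : Matrix (Fin q) (Fin p) ℝ)
    (hcard : ∀ l, 1 ≤ (uniqueSet A l).card)
    (x : Ω → Fin p → ℝ) (ε : Ω → Fin q → ℝ)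
    (Sig : Matrix (Fin p) (Fin p) ℝ) (γ : Fin q → ℝ)
    (hxL2 : ∀ l, MemLp (fun ω => x ω l) 2 μ)
    (hεL2 : ∀ j, MemLp (fun ω => ε ω j) 2 μ)
    (hx0 : ∀ l, ∫ ω, x ω l ∂μ = 0)
    (hε0 : ∀ j, ∫ ω, ε ω j ∂μ = 0)
    (hcovx : ∀ l k, ∫ ω, x ω l * x ω k ∂μ = Sig l k)
    (hcovε : ∀ i j, ∫ ω, ε ω i * ε ω j ∂μ = if i = j then γ i else 0)
    (huncorr : ∀ l j, ∫ ω, x ω l * ε ω j ∂μ = 0)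
    (z : Ω → Fin q → ℝ) (hz : ∀ ω j, z ω j = (∑ k, A j k * x ω k) + ε ω j) :
    let m : Fin p → Ω → ℝ :=
      fun l ω => ((uniqueSet A l).card : ℝ)⁻¹ * ∑ j ∈ uniqueSet A l, z ω j
    let cov : (Ω → ℝ) → (Ω → ℝ) → ℝ :=
      fun f g => ∫ ω, (f ω - ∫ ω', f ω' ∂μ) * (g ω - ∫ ω', g ω' ∂μ) ∂μ
    (∀ l k : Fin p, l ≠ k → cov (m l) (m k) = Sig l k) ∧
    (∀ l : Fin p,
      cov (m l) (m l) = Sig l l + (((uniqueSet A l).card : ℝ)⁻¹) ^ 2 *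
        ∑ j ∈ uniqueSet A l, γ j) := by
  intro m cov
  have hm (l k : Fin p) : cov (m l) (m k) = Sig l k + ((uniqueSet A l).card : ℝ)⁻¹ *
      ((uniqueSet A k).card : ℝ)⁻¹ * ∑ j ∈ uniqueSet A l ∩ uniqueSet A k, γ j :=
    covariance_mean_uniqueSet Sig γ hxL2 hεL2 hx0 hε0 hcovx hcovε huncorr hz
      (card_pos.mp (hcard l)) (card_pos.mp (hcard k))
  refine ⟨fun l k hlk => ?_, fun l => ?_⟩
  · rw [hm, disjoint_iff_inter_eq_empty.mp (disjoint_uniqueSet hlk), sum_empty, mul_zero,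
      add_zero]
  · rw [hm, inter_self, sq]

/-- covariance structure of the mean-of-unique-variables aggregates:
under the latent factor model `z = A x + ε` with mean-zero square-integrable `x`, `ε`,
`cov(x) = Σ`, `cov(ε) = diag(γ₁,…,γ_q)`, `x` uncorrelated with `ε`, and `|S_l| ≥ 1`,
the aggregates `m_l = |S_l|⁻¹ ∑_{j ∈ S_l} z_j` satisfy `Cov(m_l, m_k) = σ_{lk}` for
`l ≠ k` and `Var(m_l) = σ_{ll} + |S_l|⁻² ∑_{j ∈ S_l} γ_j`. -/
theorem stmt15 {Ω : Type*} [MeasurableSpace Ω] (μ : Measure Ω) [IsProbabilityMeasure μ]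
    {q p : ℕ} (A : Matrix (Fin q) (Fin p) ℝ) (hA : ∀ j k, A j k = 0 ∨ A j k = 1)
    (hcard : ∀ l, 1 ≤ (uniqueSet A l).card)
    (x : Ω → Fin p → ℝ) (ε : Ω → Fin q → ℝ)
    (Sig : Matrix (Fin p) (Fin p) ℝ) (hSig : Sig.IsSymm) (γ : Fin q → ℝ)
    (hxL2 : ∀ l, MemLp (fun ω => x ω l) 2 μ)
    (hεL2 : ∀ j, MemLp (fun ω => ε ω j) 2 μ)
    (hx0 : ∀ l, ∫ ω, x ω l ∂μ = 0)
    (hε0 : ∀ j, ∫ ω, ε ω j ∂μ = 0)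
    (hcovx : ∀ l k, ∫ ω, x ω l * x ω k ∂μ = Sig l k)
    (hcovε : ∀ i j, ∫ ω, ε ω i * ε ω j ∂μ = if i = j then γ i else 0)
    (huncorr : ∀ l j, ∫ ω, x ω l * ε ω j ∂μ = 0)
    (z : Ω → Fin q → ℝ) (hz : ∀ ω j, z ω j = (∑ k, A j k * x ω k) + ε ω j) :
    let m : Fin p → Ω → ℝ :=
      fun l ω => ((uniqueSet A l).card : ℝ)⁻¹ * ∑ j ∈ uniqueSet A l, z ω j
    let cov : (Ω → ℝ) → (Ω → ℝ) → ℝ :=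
      fun f g => ∫ ω, (f ω - ∫ ω', f ω' ∂μ) * (g ω - ∫ ω', g ω' ∂μ) ∂μ
    (∀ l k : Fin p, l ≠ k → cov (m l) (m k) = Sig l k) ∧
    (∀ l : Fin p,
      cov (m l) (m l) = Sig l l + (((uniqueSet A l).card : ℝ)⁻¹) ^ 2 *
        ∑ j ∈ uniqueSet A l, γ j) :=
  stmt15_general μ A hcard x ε Sig γ hxL2 hεL2 hx0 hε0 hcovx hcovε huncorr z hz
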